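/- Let E = EuclideanSpace ℝ (Fin n), let f : E → ℝ be differentiable with gradient ∇f that is Lipschitz with constant L > 0. Let d ∈ ℝⁿ with 1 ≤ dⱼ ≤ κ_max for all j, let ρ > 0 satisfy ρ·κ_max ≤ 1/L, and define the diagonal operator P by (P u)ⱼ = ρ·dⱼ·uⱼ. Then for every v ∈ E, f(v − P(∇f(v))) ≤ f(v) − (ρ/2)·‖∇f(v)‖². -/

import Mathlib

/-!
Comparing `t ↦ f (v + t • h)` on `[0, 1]` with the parabola whose derivative dominates it gives
the descent lemma `f (v + h) ≤ f v + ⟪∇f v, h⟫ + L/2 ‖h‖²`. For `h = -P ∇f v` the coordinatewise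
bound `L ρ dⱼ ≤ 1` gives `L ‖P ∇f v‖² ≤ ⟪∇f v, P ∇f v⟫`, so the quadratic term eats at most half of
the linear decrease, and the remaining half is at least `ρ/2 ‖∇f v‖²` because `dⱼ ≥ 1`.
-/

open NNReal

section Descent

variable {E : Type*} [NormedAddCommGroup E] [InnerProductSpace ℝ E] [CompleteSpace E]
  {f : E → ℝ} {K : ℝ≥0}

lemma inner_gradient_sub_le_of_lipschitzWith (hK : LipschitzWith K (gradient f))
    (v h : E) {t : ℝ} (ht : 0 ≤ t) :
    inner ℝ (gradient f (v + t • h) - gradient f v) h ≤ K * t * ‖h‖ ^ 2 :=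
  calc inner ℝ (gradient f (v + t • h) - gradient f v) h
      ≤ ‖gradient f (v + t • h) - gradient f v‖ * ‖h‖ := real_inner_le_norm _ _
    _ ≤ K * ‖(v + t • h) - v‖ * ‖h‖ := by
        gcongr; simpa only [dist_eq_norm] using hK.dist_le_mul (v + t • h) v
    _ = K * t * ‖h‖ ^ 2 := by
        rw [add_sub_cancel_left, norm_smul, Real.norm_of_nonneg ht]; ring

lemma hasDerivAt_comp_add_smul (hf : Differentiable ℝ f) (v h : E) (t : ℝ) :
    HasDerivAt (fun s : ℝ => f (v + s • h)) (inner ℝ (gradient f (v + t • h)) h) t := by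
  have hline : HasDerivAt (fun s : ℝ => v + s • h) h t := by
    simpa using ((hasDerivAt_id t).smul_const h).const_add v
  simpa [Function.comp_def] using
    (hf (v + t • h)).hasGradientAt.hasFDerivAt.comp_hasDerivAt t hline

theorem le_add_inner_gradient_add_of_lipschitzWith (hf : Differentiable ℝ f)
    (hK : LipschitzWith K (gradient f)) (v h : E) :
    f (v + h) ≤ f v + inner ℝ (gradient f v) h + K / 2 * ‖h‖ ^ 2 := by
  have hderiv := hasDerivAt_comp_add_smul hf v h
  have key := image_le_of_deriv_right_le_deriv_boundary
    (f := fun t : ℝ => f (v + t • h)) (a := 0) (b := 1)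
    (B := fun t => f v + t * inner ℝ (gradient f v) h + K / 2 * t ^ 2 * ‖h‖ ^ 2)
    (B' := fun t => inner ℝ (gradient f v) h + K * t * ‖h‖ ^ 2)
    (fun t _ => (hderiv t).continuousAt.continuousWithinAt)
    (fun t _ => (hderiv t).hasDerivWithinAt) (by simp) (by fun_prop)
    (fun t _ => (((((hasDerivAt_id' t).mul_const _).const_add (f v)).add
        (((hasDerivAt_pow 2 t).const_mul (K / 2 : ℝ)).mul_const (‖h‖ ^ 2))).congr_deriv
        (by ring)).hasDerivWithinAt)
    (fun t ht => by
      have := inner_gradient_sub_le_of_lipschitzWith hK v h ht.1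
      rw [inner_sub_left] at this
      linarith)
    (Set.right_mem_Icc.2 zero_le_one)
  simpa using key

theorem le_sub_half_inner_gradient_of_lipschitzWith (hf : Differentiable ℝ f)
    (hK : LipschitzWith K (gradient f)) (v w : E)
    (hw : K * ‖w‖ ^ 2 ≤ inner ℝ (gradient f v) w) :
    f (v - w) ≤ f v - inner ℝ (gradient f v) w / 2 := by
  have := le_add_inner_gradient_add_of_lipschitzWith hf hK v (-w)
  rw [← sub_eq_add_neg, inner_neg_right, norm_neg] at this
  linarith

end Descent

section Diagonal

variable {ι : Type*} [Fintype ι] {c : ι → ℝ} {g u : EuclideanSpace ℝ ι}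

lemma mul_norm_sq_le_inner_of_le {a : ℝ} (hu : ∀ j, u j = c j * g j) (hc : ∀ j, a ≤ c j) :
    a * ‖g‖ ^ 2 ≤ inner ℝ g u := by
  rw [EuclideanSpace.real_norm_sq_eq, PiLp.inner_apply, Finset.mul_sum]
  refine Finset.sum_le_sum fun j _ => ?_
  simp only [hu, RCLike.inner_apply, conj_trivial]
  nlinarith [hc j, sq_nonneg (g j)]

lemma mul_norm_sq_le_inner_of_mul_le_one {K : ℝ} (hu : ∀ j, u j = c j * g j)
    (hc : ∀ j, 0 ≤ c j ∧ K * c j ≤ 1) :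
    K * ‖u‖ ^ 2 ≤ inner ℝ g u := by
  rw [EuclideanSpace.real_norm_sq_eq, PiLp.inner_apply, Finset.mul_sum]
  refine Finset.sum_le_sum fun j _ => ?_
  simp only [hu, RCLike.inner_apply, conj_trivial]
  nlinarith [mul_le_mul_of_nonneg_right (hc j).2 (mul_nonneg (hc j).1 (sq_nonneg (g j)))]

end Diagonal

theorem stmt1_general {n : ℕ}
    (f : EuclideanSpace ℝ (Fin n) → ℝ) (hf : Differentiable ℝ f)
    (L : ℝ) (hL : 0 < L)
    (hlip : LipschitzWith (Real.toNNReal L) (fun v => gradient f v))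
    (d : Fin n → ℝ) (κmax : ℝ)
    (hd : ∀ j, 1 ≤ d j ∧ d j ≤ κmax)
    (ρ : ℝ) (hρ : 0 < ρ) (hρκ : ρ * κmax ≤ 1 / L)
    (P : EuclideanSpace ℝ (Fin n) → EuclideanSpace ℝ (Fin n))
    (hP : ∀ u j, P u j = ρ * d j * u j) :
    ∀ v, f (v - P (gradient f v)) ≤ f v - (ρ / 2) * ‖gradient f v‖ ^ 2 := by
  intro v
  have hρd : ∀ j, 0 ≤ ρ * d j ∧ L * (ρ * d j) ≤ 1 := fun j => by
    have hLρκ : L * (ρ * κmax) ≤ 1 := by rwa [le_div_iff₀' hL] at hρκ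
    constructor <;> nlinarith [hd j]
  have hdescent := le_sub_half_inner_gradient_of_lipschitzWith hf hlip v (P (gradient f v)) <| by
    rw [Real.coe_toNNReal L hL.le]
    exact mul_norm_sq_le_inner_of_mul_le_one (hP _) hρd
  have hinner := mul_norm_sq_le_inner_of_le (a := ρ) (hP (gradient f v)) fun j => by
    nlinarith [hd j]
  linarith

/-- Descent lemma for the diagonal preconditioner `P = ρ · diag(d₁,…,dₙ)` with
`1 ≤ dⱼ ≤ κmax` and `ρ · κmax ≤ 1/L`. -/
theorem stmt1 {n : ℕ} (hn : 1 ≤ n)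
    (f : EuclideanSpace ℝ (Fin n) → ℝ) (hf : Differentiable ℝ f)
    (L : ℝ) (hL : 0 < L)
    (hlip : LipschitzWith (Real.toNNReal L) (fun v => gradient f v))
    (d : Fin n → ℝ) (κmax : ℝ)
    (hd : ∀ j, 1 ≤ d j ∧ d j ≤ κmax)
    (ρ : ℝ) (hρ : 0 < ρ) (hρκ : ρ * κmax ≤ 1 / L)
    (P : EuclideanSpace ℝ (Fin n) → EuclideanSpace ℝ (Fin n))
    (hP : ∀ u j, P u j = ρ * d j * u j) :
    ∀ v, f (v - P (gradient f v)) ≤ f v - (ρ / 2) * ‖gradient f v‖ ^ 2 :=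
  stmt1_general f hf L hL hlip d κmax hd ρ hρ hρκ P hP
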